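/- arXiv:1605.00406 — 6 statements merged into one kernel-verified Lean document; each statement's English description precedes it below -/
import Mathlib

section
/- Let σ ≥ 1 and let m = q·σ + r for non-negative integers q and r with 0 < r ≤ σ. Then there exists a weighted bipartite graph with both vertex parts of size σ and total weight m whose maximum weight matching has weight exactly q + 1; that is, there exists a weight function w : Fin σ → Fin σ → ℕ with ∑_{u,v} w u v = m such that some matching has weight q + 1 and every matching has weight at most q + 1. -/
/-- `M` is a matching: no two distinct chosen edges share an endpoint. -/
def IsMatching {σ : ℕ} (M : Finset (Fin σ × Fin σ)) : Prop :=
  ∀ e ∈ M, ∀ f ∈ M, e ≠ f → e.1 ≠ f.1 ∧ e.2 ≠ f.2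

/-- The weight of a matching `M` with respect to the weight function `w`. -/
def matchingWeight {σ : ℕ} (w : Fin σ → Fin σ → ℕ) (M : Finset (Fin σ × Fin σ)) : ℕ :=
  ∑ e ∈ M, w e.1 e.2

theorem exists_graph_mwm_eq_q_add_one
    (σ q r m : ℕ) (hσ : 1 ≤ σ) (hr : 0 < r) (hrσ : r ≤ σ) (hm : m = q * σ + r) :
    ∃ w : Fin σ → Fin σ → ℕ,
      (∑ u, ∑ v, w u v) = m ∧
      (∃ M : Finset (Fin σ × Fin σ), IsMatching M ∧ matchingWeight w M = q + 1) ∧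
      (∀ M : Finset (Fin σ × Fin σ), IsMatching M → matchingWeight w M ≤ q + 1) := by
  haveI : NeZero σ := ⟨by omega⟩
  refine ⟨fun u v => if u = 0 then (if v.val < r then q + 1 else q) else 0, ?_, ?_, ?_⟩
  · rw [Finset.sum_eq_single (0 : Fin σ)]
    · have : ∀ v : Fin σ, (if (0 : Fin σ) = 0 then (if v.val < r then q + 1 else q) else 0)
          = q + (if v.val < r then 1 else 0) := by
        intro v; by_cases h : v.val < r <;> simp [h]
      rw [Finset.sum_congr rfl (fun v _ => this v), Finset.sum_add_distrib,
        Finset.sum_boole, Finset.sum_const, Finset.card_univ, Fintype.card_fin]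
      have hcard : (Finset.univ.filter (fun v : Fin σ => v.val < r)).card = r := by
        rcases eq_or_lt_of_le hrσ with h | h
        · rw [Finset.filter_true_of_mem (fun v _ => h ▸ v.isLt), Finset.card_univ,
            Fintype.card_fin, h]
        · have : (Finset.univ.filter (fun v : Fin σ => v.val < r)) = Finset.Iio ⟨r, h⟩ := by
            ext v; simp [Fin.lt_def]
          rw [this, Fin.card_Iio]
      simp [hcard, hm, mul_comm]
    · intro b _ hb; simp [hb]
    · simp
  · refine ⟨{(0, 0)}, ?_, ?_⟩
    · intro e he f hf hef; simp_all
    · simp [matchingWeight, hr]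
  · intro M hM
    classical
    unfold matchingWeight
    rw [← Finset.sum_filter_add_sum_filter_not M (fun e => e.1 = 0)]
    have h2 : ∑ e ∈ M.filter (fun e => ¬ e.1 = 0), (if e.1 = 0 then (if e.2.val < r then q + 1 else q) else 0) = 0 := by
      apply Finset.sum_eq_zero; intro e he
      simp only [Finset.mem_filter] at he
      simp [he.2]
    rw [h2, add_zero]
    have hcard : (M.filter (fun e => e.1 = 0)).card ≤ 1 := by
      rw [Finset.card_le_one]
      intro a ha b hb
      simp only [Finset.mem_filter] at ha hb
      by_contra hab
      exact (hM a ha.1 b hb.1 hab).1 (ha.2.trans hb.2.symm)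
    calc ∑ e ∈ M.filter (fun e => e.1 = 0), (if e.1 = 0 then (if e.2.val < r then q + 1 else q) else 0)
        ≤ ∑ _e ∈ M.filter (fun e => e.1 = 0), (q + 1) := by
          apply Finset.sum_le_sum; intro e _
          split
          · split <;> omega
          · omega
      _ ≤ q + 1 := by
          rw [Finset.sum_const, smul_eq_mul]
          exact Nat.mul_le_mul_right _ hcard |>.trans (by omega)
end

section
/- Let σ ≥ 1 and let m = q·σ + r for non-negative integers q and r with 0 < r ≤ σ. Then every weighted bipartite graph with both vertex parts of size σ and total weight m admits a matching of weight at least q + 1; that is, for every weight function w : Fin σ → Fin σ → ℕ with ∑_{u,v} w u v = m, there exists a matching M with weight at least q + 1. -/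
theorem mwm_ge_q_add_one
    (σ q r m : ℕ) (hσ : 1 ≤ σ) (hr : 0 < r) (hrσ : r ≤ σ) (hm : m = q * σ + r)
    (w : Fin σ → Fin σ → ℕ) (hw : (∑ u, ∑ v, w u v) = m) :
    ∃ M : Finset (Fin σ × Fin σ), IsMatching M ∧ q + 1 ≤ matchingWeight w M := by
  haveI : NeZero σ := ⟨by omega⟩
  by_contra h
  push_neg at h
  have key : ∀ k : Fin σ, (∑ u : Fin σ, w u (u + k)) ≤ q := by
    intro k
    have hM : IsMatching ((Finset.univ : Finset (Fin σ)).image (fun u => (u, u + k))) := by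
      intro e he f hf hef
      simp only [Finset.mem_image, Finset.mem_univ, true_and] at he hf
      obtain ⟨a, rfl⟩ := he; obtain ⟨b, rfl⟩ := hf
      have hab : a ≠ b := fun hh => hef (by simp [hh])
      exact ⟨hab, fun hh => hab (add_right_cancel hh)⟩
    have hlt := h _ hM
    have hinj : ∀ a ∈ (Finset.univ : Finset (Fin σ)), ∀ b ∈ Finset.univ,
        (fun u => (u, u + k)) a = (fun u => (u, u + k)) b → a = b := by
      intro a _ b _ hab
      simpa using congrArg Prod.fst hab
    rw [matchingWeight, Finset.sum_image hinj] at hlt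
    dsimp only at hlt
    omega
  have total : (∑ k : Fin σ, ∑ u : Fin σ, w u (u + k)) = m := by
    rw [Finset.sum_comm, ← hw]
    refine Finset.sum_congr rfl fun u _ => ?_
    exact Fintype.sum_equiv (Equiv.addLeft u) (fun k => w u (u + k)) (fun v => w u v) (fun k => rfl)
  have hle : (∑ k : Fin σ, ∑ u : Fin σ, w u (u + k)) ≤ q * σ := by
    calc (∑ k : Fin σ, ∑ u : Fin σ, w u (u + k)) ≤ ∑ _k : Fin σ, q :=
          Finset.sum_le_sum (fun k _ => key k)
      _ = q * σ := by simp [Finset.sum_const, mul_comm]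
  omega
end

section
/- Let σ ≥ 1 and let m = q·σ + r for non-negative integers q and r with 0 < r ≤ σ. Then the minimum, over all weighted bipartite graphs with both vertex parts of size σ and total weight m, of the maximum weight matching value equals q + 1; that is, every weight function w : Fin σ → Fin σ → ℕ with ∑_{u,v} w u v = m has a matching of weight at least q + 1, and there exists such a weight function for which every matching has weight at most q + 1. -/
theorem min_mwm_eq_q_add_one
    (σ q r m : ℕ) (hσ : 1 ≤ σ) (hr : 0 < r) (hrσ : r ≤ σ) (hm : m = q * σ + r) :
    (∀ w : Fin σ → Fin σ → ℕ, (∑ u, ∑ v, w u v) = m →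
      ∃ M : Finset (Fin σ × Fin σ), IsMatching M ∧ q + 1 ≤ matchingWeight w M) ∧
    (∃ w : Fin σ → Fin σ → ℕ, (∑ u, ∑ v, w u v) = m ∧
      ∀ M : Finset (Fin σ × Fin σ), IsMatching M → matchingWeight w M ≤ q + 1) := by
  haveI : NeZero σ := ⟨by omega⟩
  constructor
  · intro w hw
    have hdiag : ∑ k : Fin σ, ∑ u : Fin σ, w u (u + k) = m := by
      rw [Finset.sum_comm, ← hw]
      refine Finset.sum_congr rfl fun u _ => ?_
      exact Fintype.sum_equiv (Equiv.addLeft u) _ _ (fun k => rfl)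
    have hex : ∃ k : Fin σ, q + 1 ≤ ∑ u : Fin σ, w u (u + k) := by
      by_contra h
      push_neg at h
      have hle : ∑ k : Fin σ, ∑ u : Fin σ, w u (u + k) ≤ ∑ _k : Fin σ, q :=
        Finset.sum_le_sum fun k _ => Nat.lt_succ_iff.mp (h k)
      rw [hdiag, Finset.sum_const, Finset.card_univ, Fintype.card_fin, smul_eq_mul, Nat.mul_comm σ q] at hle
      omega
    obtain ⟨k, hk⟩ := hex
    refine ⟨Finset.univ.image (fun u : Fin σ => (u, u + k)), ?_, ?_⟩
    · intro e he f hf hne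
      simp only [Finset.mem_image, Finset.mem_univ, true_and] at he hf
      obtain ⟨u, rfl⟩ := he
      obtain ⟨v, rfl⟩ := hf
      have huv : u ≠ v := fun h => hne (by rw [h])
      exact ⟨huv, fun h => huv (add_right_cancel h)⟩
    · rw [matchingWeight, Finset.sum_image (fun a _ b _ h => congrArg Prod.fst h)]
      exact hk
  · refine ⟨fun u v => if u = (0 : Fin σ) then q + (if (v : ℕ) < r then 1 else 0) else 0, ?_, ?_⟩
    · rw [Finset.sum_eq_single (0 : Fin σ)]
      · simp only [if_pos rfl, if_true]
        rw [Finset.sum_add_distrib, Finset.sum_const, Finset.card_univ, Fintype.card_fin,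
          smul_eq_mul, Fin.sum_univ_eq_sum_range (fun i => if i < r then 1 else 0)]
        have h1 : ∑ i ∈ Finset.range σ, (if i < r then 1 else 0) = r := by
          rw [Finset.sum_ite, Finset.sum_const, Finset.sum_const, smul_eq_mul, mul_one,
            smul_eq_mul, mul_zero, add_zero,
            show Finset.filter (fun i => i < r) (Finset.range σ) = Finset.range r by
              ext i; simp; omega]
          exact Finset.card_range r
        rw [h1, Nat.mul_comm]
        omega
      · intro b _ hb
        simp [hb]
      · simp
    · intro M hM
      classical
      have hcard : (M.filter (fun e => e.1 = (0 : Fin σ))).card ≤ 1 := by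
        refine Finset.card_le_one.mpr fun a ha b hb => ?_
        simp only [Finset.mem_filter] at ha hb
        by_contra hab
        exact ((hM a ha.1 b hb.1 hab).1) (ha.2.trans hb.2.symm)
      rw [matchingWeight, ← Finset.sum_filter_add_sum_filter_not M (fun e => e.1 = (0 : Fin σ))]
      have h2 : ∑ e ∈ M.filter (fun e => ¬ e.1 = (0 : Fin σ)),
          (if e.1 = (0 : Fin σ) then q + (if (e.2 : ℕ) < r then 1 else 0) else 0) = 0 := by
        refine Finset.sum_eq_zero fun e he => ?_
        simp only [Finset.mem_filter] at he
        simp [he.2]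
      have h1 : ∑ e ∈ M.filter (fun e => e.1 = (0 : Fin σ)),
          (if e.1 = (0 : Fin σ) then q + (if (e.2 : ℕ) < r then 1 else 0) else 0) ≤ q + 1 := by
        calc _ ≤ (M.filter (fun e => e.1 = (0 : Fin σ))).card * (q + 1) := by
              refine Finset.sum_le_card_nsmul _ _ _ fun e _ => ?_
              split <;> first | (split <;> omega) | omega
          _ ≤ 1 * (q + 1) := Nat.mul_le_mul_right _ hcard
          _ = q + 1 := one_mul _
      omega
end

section
/- Let σ ≥ 1 and m ≥ σ be positive integers. Then the minimum, over all weighted bipartite graphs with both vertex parts of size σ and total weight m, of the maximum weight matching value equals ⌈(m − σ)/σ⌉ + 1; that is, every weight function w : Fin σ → Fin σ → ℕ with ∑_{u,v} w u v = m has a matching of weight at least ⌈(m − σ)/σ⌉ + 1, and there exists such a weight function for which every matching has weight at most ⌈(m − σ)/σ⌉ + 1. -/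
theorem min_mwm_eq_ceil_add_one
    (σ m : ℕ) (hσ : 1 ≤ σ) (hm : σ ≤ m) :
    (∀ w : Fin σ → Fin σ → ℕ, (∑ u, ∑ v, w u v) = m →
      ∃ M : Finset (Fin σ × Fin σ), IsMatching M ∧
        ⌈((m : ℚ) - (σ : ℚ)) / (σ : ℚ)⌉ + 1 ≤ (matchingWeight w M : ℤ)) ∧
    (∃ w : Fin σ → Fin σ → ℕ, (∑ u, ∑ v, w u v) = m ∧
      ∀ M : Finset (Fin σ × Fin σ), IsMatching M →
        (matchingWeight w M : ℤ) ≤ ⌈((m : ℚ) - (σ : ℚ)) / (σ : ℚ)⌉ + 1) := by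
  haveI : NeZero σ := ⟨by omega⟩
  have hσQ : (0 : ℚ) < (σ : ℚ) := by exact_mod_cast hσ
  constructor
  · -- lower bound
    intro w hw
    -- diagonal matchings
    set Mj : Fin σ → Finset (Fin σ × Fin σ) :=
      fun j => Finset.univ.image (fun u => (u, u + j)) with hMj
    have hmatch : ∀ j, IsMatching (Mj j) := by
      intro j e he f hf hne
      simp only [hMj, Finset.mem_image, Finset.mem_univ, true_and] at he hf
      obtain ⟨u, rfl⟩ := he
      obtain ⟨v, rfl⟩ := hf
      have huv : u ≠ v := by rintro rfl; exact hne rfl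
      exact ⟨huv, fun h => huv (add_right_cancel h)⟩
    have hweight : ∀ j, matchingWeight w (Mj j) = ∑ u, w u (u + j) := by
      intro j
      unfold matchingWeight
      rw [hMj, Finset.sum_image]
      intro a _ b _ h
      exact (Prod.mk.injEq _ _ _ _ ▸ h).1
    have hsum : ∑ j, matchingWeight w (Mj j) = m := by
      simp only [hweight]
      rw [Finset.sum_comm]
      rw [← hw]
      refine Finset.sum_congr rfl (fun u _ => ?_)
      exact Fintype.sum_equiv (Equiv.addLeft u) _ _ (fun j => rfl)
    -- pick maximizing j
    obtain ⟨j, -, hj⟩ := Finset.exists_max_image Finset.univ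
      (fun j => matchingWeight w (Mj j)) ⟨0, Finset.mem_univ 0⟩
    have hmW : m ≤ σ * matchingWeight w (Mj j) := by
      calc m = ∑ i, matchingWeight w (Mj i) := hsum.symm
        _ ≤ ∑ _i : Fin σ, matchingWeight w (Mj j) :=
            Finset.sum_le_sum (fun i _ => hj i (Finset.mem_univ i))
        _ = σ * matchingWeight w (Mj j) := by
            rw [Finset.sum_const, Finset.card_univ, Fintype.card_fin, smul_eq_mul]
    refine ⟨Mj j, hmatch j, ?_⟩
    have : (⌈((m : ℚ) - σ) / σ⌉ : ℤ) ≤ (matchingWeight w (Mj j) : ℤ) - 1 := by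
      rw [Int.ceil_le]
      rw [div_le_iff₀ hσQ]
      push_cast
      have : (m : ℚ) ≤ σ * matchingWeight w (Mj j) := by exact_mod_cast hmW
      nlinarith
    omega
  · -- upper bound: concentrate on one row
    set q := m / σ with hq
    set r := m % σ with hr
    refine ⟨fun u v => if u = 0 then q + (if (v : ℕ) < r then 1 else 0) else 0, ?_, ?_⟩
    · rw [Finset.sum_eq_single (0 : Fin σ)]
      · simp only [if_pos rfl, if_true]
        rw [Finset.sum_add_distrib, Finset.sum_const, Finset.card_univ, Fintype.card_fin,
          smul_eq_mul]
        have key : ∀ n : ℕ, ∑ i ∈ Finset.range n, (if i < r then (1:ℕ) else 0) = min n r := by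
          intro n
          induction n with
          | zero => simp
          | succ n ih => rw [Finset.sum_range_succ, ih]; split <;> omega
        have : ∑ v : Fin σ, (if (v : ℕ) < r then (1:ℕ) else 0)
            = ∑ i ∈ Finset.range σ, (if i < r then (1:ℕ) else 0) :=
          Fin.sum_univ_eq_sum_range (fun i => if i < r then (1:ℕ) else 0) σ
        rw [this, key, min_eq_right (Nat.mod_lt m (show 0 < σ by omega)).le]
        exact Nat.div_add_mod m σ
      · intro b _ hb
        simp only [if_neg hb, Finset.sum_const_zero]
      · intro h; exact absurd (Finset.mem_univ _) h
    · intro M hM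
      -- weight equals sum over edges with first coord 0, of which there is at most one
      have hle : matchingWeight (fun u v => if u = 0 then q + (if (v : ℕ) < r then 1 else 0) else 0) M
          ≤ q + (if r = 0 then 0 else 1) := by
        unfold matchingWeight
        set S := M.filter (fun e => e.1 = 0) with hS
        have hsub : ∑ e ∈ M, (if e.1 = 0 then q + (if (e.2 : ℕ) < r then 1 else 0) else 0)
            = ∑ e ∈ S, (if e.1 = 0 then q + (if (e.2 : ℕ) < r then 1 else 0) else 0) := by
          rw [hS, Finset.sum_filter_of_ne]
          intro e _ h
          by_contra hc
          rw [if_neg hc] at h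
          exact h rfl
        rw [hsub]
        have hcard : S.card ≤ 1 := by
          rw [Finset.card_le_one]
          intro a ha b hb
          simp only [hS, Finset.mem_filter] at ha hb
          by_contra hne
          exact (hM a ha.1 b hb.1 hne).1 (ha.2.trans hb.2.symm)
        rcases Finset.card_le_one_iff_subset_singleton.mp hcard with ⟨e, he⟩
        calc ∑ f ∈ S, (if f.1 = 0 then q + (if (f.2 : ℕ) < r then 1 else 0) else 0)
            ≤ ∑ f ∈ {e}, (if f.1 = 0 then q + (if (f.2 : ℕ) < r then 1 else 0) else 0) :=
              Finset.sum_le_sum_of_subset he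
          _ = (if e.1 = 0 then q + (if (e.2 : ℕ) < r then 1 else 0) else 0) :=
              Finset.sum_singleton _ _
          _ ≤ q + (if r = 0 then 0 else 1) := by
              by_cases h1 : e.1 = 0
              · rw [if_pos h1]
                by_cases h2 : (e.2 : ℕ) < r
                · rw [if_pos h2, if_neg (by omega)]
                · rw [if_neg h2]; split <;> omega
              · rw [if_neg h1]; exact Nat.zero_le _
      have hceil : (q : ℤ) + (if r = 0 then 0 else 1) ≤ ⌈((m : ℚ) - σ) / σ⌉ + 1 := by
        have hdm : σ * q + r = m := Nat.div_add_mod m σ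
        have hlt : (q : ℤ) + (if r = 0 then 0 else 1) - 2 < ⌈((m : ℚ) - σ) / σ⌉ := by
          rw [Int.lt_ceil, lt_div_iff₀ hσQ]
          push_cast
          have hq1 : 1 ≤ q := Nat.one_le_div_iff (by omega) |>.mpr hm
          split
          · rename_i h0
            have : (σ : ℚ) * q = m := by
              have : σ * q = m := by omega
              exact_mod_cast this
            nlinarith [hσQ, (by exact_mod_cast hq1 : (1:ℚ) ≤ (q:ℚ))]
          · rename_i h0
            have hrpos : 1 ≤ r := by omega
            have : (σ : ℚ) * q + 1 ≤ m := by
              have : σ * q + 1 ≤ m := by omega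
              exact_mod_cast this
            nlinarith
        omega
      have hle' : (matchingWeight (fun u v => if u = 0 then q + (if (v : ℕ) < r then 1 else 0) else 0) M : ℤ) ≤ (q : ℤ) + (if r = 0 then 0 else 1) := by
        rcases eq_or_ne r 0 with h0 | h0
        · simp only [if_pos h0] at hle ⊢
          exact_mod_cast hle
        · simp only [if_neg h0] at hle ⊢
          exact_mod_cast hle
      exact hle'.trans hceil
end

section
/- Let σ and m be positive integers. Then the minimum, over all weighted bipartite graphs with both vertex parts of size σ and total weight m, of the maximum weight matching value equals ⌈(m − σ)/σ⌉ + 1, where the ceiling is taken of the rational number ((m : ℤ) − σ)/σ; that is, every weight function w : Fin σ → Fin σ → ℕ with ∑_{u,v} w u v = m has a matching of weight at least ⌈(m − σ)/σ⌉ + 1, and there exists such a weight function for which every matching has weight at most ⌈(m − σ)/σ⌉ + 1. -/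
open Finset

theorem Int.ceil_sub_div_self_add_one {K : Type*} [Field K] [LinearOrder K]
    [IsStrictOrderedRing K] [FloorRing K] (a : K) {b : K} (hb : b ≠ 0) :
    ⌈(a - b) / b⌉ + 1 = ⌈a / b⌉ := by
  rw [sub_div, div_self hb, Int.ceil_sub_one, sub_add_cancel]

theorem exists_sum_eq_forall_le_ceil_div (m : ℕ) {n : ℕ} (hn : 0 < n) :
    ∃ f : Fin n → ℕ, ∑ i, f i = m ∧ ∀ i, f i ≤ ⌈(m : ℚ) / n⌉₊ := by
  refine ⟨fun i => m / n + if (i : ℕ) < m % n then 1 else 0, ?_, fun i => ?_⟩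
  · rw [sum_add_distrib, sum_boole, Fin.card_filter_val_lt, sum_const, card_univ,
      Fintype.card_fin, smul_eq_mul, min_eq_right (Nat.mod_lt m hn).le, Nat.cast_id,
      Nat.div_add_mod]
  · dsimp only
    split_ifs with hi
    · rw [Nat.add_one_le_iff, Nat.lt_ceil, lt_div_iff₀ (by exact_mod_cast hn)]
      have := Nat.div_add_mod' m n
      exact_mod_cast (by omega : m / n * n < m)
    · rw [add_zero, ← Nat.floor_div_eq_div (K := ℚ)]
      exact Nat.floor_le_ceil _

section Matching

variable {σ : ℕ}

def shiftMatching [NeZero σ] (j : Fin σ) : Finset (Fin σ × Fin σ) :=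
  univ.map ⟨fun u => (u, u + j), fun _ _ h => (Prod.mk.inj h).1⟩

theorem isMatching_shiftMatching [NeZero σ] (j : Fin σ) : IsMatching (shiftMatching j) := by
  simp only [IsMatching, shiftMatching, mem_map, mem_univ, true_and]
  rintro _ ⟨u, rfl⟩ _ ⟨v, rfl⟩ huv
  have : u ≠ v := by rintro rfl; exact huv rfl
  exact ⟨this, fun h => this (add_right_cancel h)⟩

theorem matchingWeight_shiftMatching [NeZero σ] (w : Fin σ → Fin σ → ℕ) (j : Fin σ) :
    matchingWeight w (shiftMatching j) = ∑ u, w u (u + j) := by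
  rw [matchingWeight, shiftMatching, sum_map]
  rfl

theorem sum_matchingWeight_shiftMatching [NeZero σ] (w : Fin σ → Fin σ → ℕ) :
    ∑ j, matchingWeight w (shiftMatching j) = ∑ u, ∑ v, w u v := by
  simp only [matchingWeight_shiftMatching]
  rw [sum_comm]
  exact sum_congr rfl fun u _ => Fintype.sum_equiv (Equiv.addLeft u) _ _ fun _ => rfl

theorem exists_isMatching_sum_le_mul_matchingWeight [NeZero σ] (w : Fin σ → Fin σ → ℕ) :
    ∃ M, IsMatching M ∧ ∑ u, ∑ v, w u v ≤ σ * matchingWeight w M := by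
  obtain ⟨j, -, hj⟩ := exists_le_of_sum_le (f := fun _ => ∑ u, ∑ v, w u v)
    (g := fun j => σ * matchingWeight w (shiftMatching j)) univ_nonempty (by
      simp [← mul_sum, sum_matchingWeight_shiftMatching])
  exact ⟨_, isMatching_shiftMatching j, hj⟩

def rowWeight (i : Fin σ) (f : Fin σ → ℕ) (u v : Fin σ) : ℕ :=
  if u = i then f v else 0

theorem sum_rowWeight (i : Fin σ) (f : Fin σ → ℕ) :
    ∑ u, ∑ v, rowWeight i f u v = ∑ v, f v := by
  simp [rowWeight]

theorem matchingWeight_rowWeight_le {M : Finset (Fin σ × Fin σ)} (hM : IsMatching M)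
    (i : Fin σ) {f : Fin σ → ℕ} {b : ℕ} (hf : ∀ v, f v ≤ b) :
    matchingWeight (rowWeight i f) M ≤ b := by
  have hrow : #{e ∈ M | e.1 = i} ≤ 1 := card_le_one.2 fun e he e' he' => by
    simp only [mem_filter] at he he'
    by_contra hne
    exact (hM e he.1 e' he'.1 hne).1 (he.2.trans he'.2.symm)
  calc matchingWeight (rowWeight i f) M = ∑ e ∈ M with e.1 = i, f e.2 := by
        simp [matchingWeight, rowWeight, sum_ite]
    _ ≤ #{e ∈ M | e.1 = i} • b := sum_le_card_nsmul _ _ _ fun e _ => hf e.2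
    _ ≤ b := by simpa using Nat.mul_le_mul_right b hrow

end Matching

theorem min_mwm_eq_ceil_add_one_general_general
    (σ m : ℕ) (hσ : 0 < σ) :
    (∀ w : Fin σ → Fin σ → ℕ, (∑ u, ∑ v, w u v) = m →
      ∃ M : Finset (Fin σ × Fin σ), IsMatching M ∧
        ⌈(((m : ℤ) : ℚ) - ((σ : ℤ) : ℚ)) / ((σ : ℤ) : ℚ)⌉ + 1 ≤ (matchingWeight w M : ℤ)) ∧
    (∃ w : Fin σ → Fin σ → ℕ, (∑ u, ∑ v, w u v) = m ∧
      ∀ M : Finset (Fin σ × Fin σ), IsMatching M →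
        (matchingWeight w M : ℤ) ≤ ⌈(((m : ℤ) : ℚ) - ((σ : ℤ) : ℚ)) / ((σ : ℤ) : ℚ)⌉ + 1) := by
  have : NeZero σ := ⟨hσ.ne'⟩
  have hceil : ⌈(((m : ℤ) : ℚ) - ((σ : ℤ) : ℚ)) / ((σ : ℤ) : ℚ)⌉ + 1 = ⌈(m : ℚ) / σ⌉₊ := by
    push_cast
    rw [Int.ceil_sub_div_self_add_one _ (by positivity), Int.natCast_ceil_eq_ceil (by positivity)]
  rw [hceil]
  refine ⟨fun w hw => ?_, ?_⟩
  · obtain ⟨M, hM, hle⟩ := exists_isMatching_sum_le_mul_matchingWeight w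
    have hdiv : (m : ℚ) / σ ≤ matchingWeight w M := by
      rw [div_le_iff₀ (by positivity), mul_comm]
      exact_mod_cast hw ▸ hle
    exact ⟨M, hM, Nat.cast_le.2 (Nat.ceil_le.2 hdiv)⟩
  · obtain ⟨f, hsum, hf⟩ := exists_sum_eq_forall_le_ceil_div m hσ
    refine ⟨rowWeight 0 f, (sum_rowWeight 0 f).trans hsum, fun M hM => ?_⟩
    exact Nat.cast_le.2 (matchingWeight_rowWeight_le hM 0 hf)

theorem min_mwm_eq_ceil_add_one_general
    (σ m : ℕ) (hσ : 0 < σ) (hm : 0 < m) :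
    (∀ w : Fin σ → Fin σ → ℕ, (∑ u, ∑ v, w u v) = m →
      ∃ M : Finset (Fin σ × Fin σ), IsMatching M ∧
        ⌈(((m : ℤ) : ℚ) - ((σ : ℤ) : ℚ)) / ((σ : ℤ) : ℚ)⌉ + 1 ≤ (matchingWeight w M : ℤ)) ∧
    (∃ w : Fin σ → Fin σ → ℕ, (∑ u, ∑ v, w u v) = m ∧
      ∀ M : Finset (Fin σ × Fin σ), IsMatching M →
        (matchingWeight w M : ℤ) ≤ ⌈(((m : ℤ) : ℚ) - ((σ : ℤ) : ℚ)) / ((σ : ℤ) : ℚ)⌉ + 1) :=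
  min_mwm_eq_ceil_add_one_general_general σ m hσ
end

section
/- Let σ and m be positive integers. Then every weighted bipartite graph with both vertex parts of size σ and total weight m admits a matching of weight at least ⌈m/σ⌉; that is, for every weight function w : Fin σ → Fin σ → ℕ with ∑_{u,v} w u v = m, there exists a matching M whose weight is at least the ceiling of m/σ. -/
/-!
The edge set of the complete bipartite graph `Fin σ × Fin σ` is partitioned into the `σ`
perfect matchings `{(u, u + k)}`, `k : Fin σ`. Their weights add up to the total weight `m`,
so by averaging one of them weighs at least `m / σ`, hence at least `⌈m / σ⌉`.
-/

open Finset

section PermMatching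

variable {σ : ℕ}

def permMatching (π : Equiv.Perm (Fin σ)) : Finset (Fin σ × Fin σ) :=
  univ.map ⟨fun u => (u, π u), fun _ _ h => congrArg Prod.fst h⟩

theorem isMatching_permMatching (π : Equiv.Perm (Fin σ)) : IsMatching (permMatching π) := by
  simp only [IsMatching, permMatching, mem_map, mem_univ, true_and]
  rintro _ ⟨a, rfl⟩ _ ⟨b, rfl⟩ hne
  have hab : a ≠ b := fun h => hne (h ▸ rfl)
  exact ⟨hab, π.injective.ne hab⟩

theorem matchingWeight_permMatching (w : Fin σ → Fin σ → ℕ) (π : Equiv.Perm (Fin σ)) :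
    matchingWeight w (permMatching π) = ∑ u, w u (π u) := by
  rw [matchingWeight, permMatching, sum_map]
  rfl

theorem sum_matchingWeight_permMatching_addRight [NeZero σ] (w : Fin σ → Fin σ → ℕ) :
    ∑ k, matchingWeight w (permMatching (Equiv.addRight k)) = ∑ u, ∑ v, w u v := by
  simp only [matchingWeight_permMatching, Equiv.coe_addRight]
  rw [sum_comm]
  exact sum_congr rfl fun u _ => Fintype.sum_equiv (Equiv.addLeft u) _ _ fun _ => rfl

end PermMatching

theorem exists_matching_ge_ceil_general
    (σ m : ℕ) (hσ : 0 < σ)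
    (w : Fin σ → Fin σ → ℕ) (hw : (∑ u, ∑ v, w u v) = m) :
    ∃ M : Finset (Fin σ × Fin σ), IsMatching M ∧
      ⌈(m : ℚ) / (σ : ℚ)⌉ ≤ (matchingWeight w M : ℤ) := by
  have : NeZero σ := ⟨hσ.ne'⟩
  obtain ⟨M, hM, hle⟩ := exists_isMatching_sum_le_mul_matchingWeight w
  refine ⟨M, hM, Int.ceil_le.mpr ?_⟩
  rw [div_le_iff₀ (by exact_mod_cast hσ), ← hw]
  exact_mod_cast hle.trans_eq (mul_comm _ _)

theorem exists_matching_ge_ceil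
    (σ m : ℕ) (hσ : 0 < σ) (hm : 0 < m)
    (w : Fin σ → Fin σ → ℕ) (hw : (∑ u, ∑ v, w u v) = m) :
    ∃ M : Finset (Fin σ × Fin σ), IsMatching M ∧
      ⌈(m : ℚ) / (σ : ℚ)⌉ ≤ (matchingWeight w M : ℤ) :=
  exists_matching_ge_ceil_general σ m hσ w hw
end
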